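/- In the four-agent economy with claims κ₁ = κ₂ = 1/3, κ₃ = κ₄ = 1/6 and linear utilities given by ν₁(F) = (3/2)λ(F ∩ [0,2/3)), ν₂(F) = (3/2)λ(F \ [1/3,2/3)), ν₃(F) = (5/3)λ(F ∩ [1/3,2/3)) + (8/3)λ(F ∩ [2/3,5/6)), ν₄(F) = (5/3)λ(F ∩ [1/3,2/3)) + (8/3)λ(F ∩ [5/6,1]): (a) for π = {A,B,C} with A = [0,1/3), B = [1/3,2/3), C = [2/3,1], unit prices on all three commodities together with x¹ = (1/3,0,0), x² = (0,0,1/3), x³ = x⁴ = (0,1/6,0) form a competitive equilibrium of E(π); (b) for ρ = {A,B,C¹,C²} with C¹ = [2/3,5/6), C² = [5/6,1], unit prices on all four commodities together with y¹ = (0,1/3,0,0), y² = (1/3,0,0,0), y³ = (0,0,1/6,0), y⁴ = (0,0,0,1/6) form a competitive equilibrium of E(ρ). In particular, agent 1's equilibrium bundle is positive only on A under π and positive only on B under ρ, even though A and B belong to both classifications and their relative price equals 1 in both equilibria. -/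

import Mathlib

/-
At unit prices every agent spends the whole budget on goods with the highest utility per unit of
money; by linearity of the utilities any strictly preferred bundle then costs more than the budget.
Under `π` agents 3 and 4 value `B` at `5/3` per unit and `C` only at `4/3`, so they buy `B` and
agent 1 is left with `A`. Splitting `C` gives agent 3 the good `C¹` and agent 4 the good `C²`, each
worth `8/3` per unit to its buyer, so `B` is released to agent 1 and agent 2 moves to `A`.
-/

open MeasureTheory Set
open scoped ENNReal Classical

noncomputable section

/-- Lebesgue measure of a set, as a real number. -/
def lvol (C : Set ℝ) : ℝ := (volume C).toReal

/-- Linear utility over tradable bundles: `V(π,x) = ∑_{C∈π} (x_C/λ(C)) ν(C)`,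
where the evaluation of each commodity is given by the set function `νf`. -/
def Vlin (parts : Finset (Set ℝ)) (νf : Set ℝ → ℝ) (x : Set ℝ → ℝ) : ℝ :=
  ∑ C ∈ parts, (x C / lvol C) * νf C

/-- Competitive equilibrium of the economy on the commodities `parts` with claims `κ`
and utilities `Vf` on tradable bundles. -/
def IsEqm {n : ℕ} (parts : Finset (Set ℝ)) (κ : Fin n → ℝ)
    (Vf : Fin n → (Set ℝ → ℝ) → ℝ) (p : Set ℝ → ℝ) (x : Fin n → Set ℝ → ℝ) : Prop :=
  (∀ C ∈ parts, 0 ≤ p C) ∧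
  (∀ i, ∀ C ∈ parts, 0 ≤ x i C) ∧
  (∀ C ∈ parts, ∑ i, x i C ≤ lvol C) ∧
  (∀ i, ∑ C ∈ parts, p C * x i C ≤ κ i * ∑ C ∈ parts, p C * lvol C) ∧
  (∀ i, ∀ y : Set ℝ → ℝ, (∀ C ∈ parts, 0 ≤ y C) → Vf i (x i) < Vf i y →
    κ i * ∑ C ∈ parts, p C * lvol C < ∑ C ∈ parts, p C * y C)

namespace Stmt12

def ν₁ (F : Set ℝ) : ℝ := (3/2) * lvol (F ∩ Set.Ico 0 (2/3))
def ν₂ (F : Set ℝ) : ℝ := (3/2) * lvol (F \ Set.Ico (1/3) (2/3))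
def ν₃ (F : Set ℝ) : ℝ :=
  (5/3) * lvol (F ∩ Set.Ico (1/3) (2/3)) + (8/3) * lvol (F ∩ Set.Ico (2/3) (5/6))
def ν₄ (F : Set ℝ) : ℝ :=
  (5/3) * lvol (F ∩ Set.Ico (1/3) (2/3)) + (8/3) * lvol (F ∩ Set.Icc (5/6) 1)

/-- The evaluation measures of the four agents. -/
def νs : Fin 4 → Set ℝ → ℝ := ![ν₁, ν₂, ν₃, ν₄]

/-- Claims `κ₁ = κ₂ = 1/3`, `κ₃ = κ₄ = 1/6`. -/
def κ : Fin 4 → ℝ := ![1/3, 1/3, 1/6, 1/6]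

def A : Set ℝ := Set.Ico 0 (1/3)
def B : Set ℝ := Set.Ico (1/3) (2/3)
def C : Set ℝ := Set.Icc (2/3) 1
def C₁ : Set ℝ := Set.Ico (2/3) (5/6)
def C₂ : Set ℝ := Set.Icc (5/6) 1

/-- The classification `π = {A,B,C}`. -/
def partsπ : Finset (Set ℝ) := {A, B, C}
/-- The refined classification `ρ = {A,B,C¹,C²}`. -/
def partsρ : Finset (Set ℝ) := {A, B, C₁, C₂}

/-- `x¹ = (1/3,0,0)`, `x² = (0,0,1/3)`, `x³ = x⁴ = (0,1/6,0)`. -/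
def xs : Fin 4 → Set ℝ → ℝ :=
  ![fun S => if S = A then 1/3 else 0,
    fun S => if S = C then 1/3 else 0,
    fun S => if S = B then 1/6 else 0,
    fun S => if S = B then 1/6 else 0]

/-- `y¹ = (0,1/3,0,0)`, `y² = (1/3,0,0,0)`, `y³ = (0,0,1/6,0)`, `y⁴ = (0,0,0,1/6)`. -/
def ys : Fin 4 → Set ℝ → ℝ :=
  ![fun S => if S = B then 1/3 else 0,
    fun S => if S = A then 1/3 else 0,
    fun S => if S = C₁ then 1/6 else 0,
    fun S => if S = C₂ then 1/6 else 0]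

end Stmt12

@[simp] lemma lvol_empty : lvol ∅ = 0 := by simp [lvol]

lemma lvol_congr {s t : Set ℝ} (h : s =ᵐ[volume] t) : lvol s = lvol t := measureReal_congr h

@[simp] lemma lvol_Ico (a b : ℝ) : lvol (Ico a b) = max (b - a) 0 := Real.volume_real_Ico

@[simp] lemma lvol_Icc (a b : ℝ) : lvol (Icc a b) = max (b - a) 0 := Real.volume_real_Icc

@[simp] lemma lvol_Icc_inter (a b : ℝ) (t : Set ℝ) : lvol (Icc a b ∩ t) = lvol (Ico a b ∩ t) :=
  lvol_congr (Ico_ae_eq_Icc.symm.inter Filter.EventuallyEq.rfl)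

@[simp] lemma lvol_inter_Icc (s : Set ℝ) (a b : ℝ) : lvol (s ∩ Icc a b) = lvol (s ∩ Ico a b) :=
  lvol_congr (Filter.EventuallyEq.rfl.inter Ico_ae_eq_Icc.symm)

lemma lvol_diff {s t : Set ℝ} (ht : MeasurableSet t) (hs : volume s ≠ ∞) :
    lvol (s \ t) = lvol s - lvol (s ∩ t) :=
  eq_sub_of_add_eq' (measureReal_inter_add_sdiff ht hs)

lemma Vlin_eq_sum (parts : Finset (Set ℝ)) (νf x : Set ℝ → ℝ) :
    Vlin parts νf x = ∑ C ∈ parts, νf C / lvol C * x C :=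
  Finset.sum_congr rfl fun _ _ => by ring

lemma sum_price_lt_of_utility_lt {parts : Finset (Set ℝ)} {u p x y : Set ℝ → ℝ} {r : ℝ}
    (hr : 0 ≤ r) (hu : ∀ C ∈ parts, u C ≤ r * p C)
    (hx : ∀ C ∈ parts, x C ≠ 0 → u C = r * p C) (hy : ∀ C ∈ parts, 0 ≤ y C)
    (h : ∑ C ∈ parts, u C * x C < ∑ C ∈ parts, u C * y C) :
    ∑ C ∈ parts, p C * x C < ∑ C ∈ parts, p C * y C := by
  have hux : ∑ C ∈ parts, u C * x C = r * ∑ C ∈ parts, p C * x C := by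
    rw [Finset.mul_sum]
    refine Finset.sum_congr rfl fun C hC => ?_
    by_cases h0 : x C = 0
    · simp [h0]
    · rw [hx C hC h0, mul_assoc]
  have huy : ∑ C ∈ parts, u C * y C ≤ r * ∑ C ∈ parts, p C * y C := by
    rw [Finset.mul_sum]
    refine Finset.sum_le_sum fun C hC => ?_
    rw [← mul_assoc]
    exact mul_le_mul_of_nonneg_right (hu C hC) (hy C hC)
  exact lt_of_mul_lt_mul_left (hux ▸ h.trans_le huy) hr

lemma isEqm_of_buys_best_ratio {n : ℕ} {parts : Finset (Set ℝ)} {κ : Fin n → ℝ}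
    {ν : Fin n → Set ℝ → ℝ} {p : Set ℝ → ℝ} {x : Fin n → Set ℝ → ℝ} (r : Fin n → ℝ)
    (hp : ∀ C ∈ parts, 0 ≤ p C) (hx : ∀ i, ∀ C ∈ parts, 0 ≤ x i C)
    (hfeas : ∀ C ∈ parts, ∑ i, x i C ≤ lvol C)
    (hbudget : ∀ i, ∑ C ∈ parts, p C * x i C = κ i * ∑ C ∈ parts, p C * lvol C)
    (hr : ∀ i, 0 ≤ r i) (hratio : ∀ i, ∀ C ∈ parts, ν i C / lvol C ≤ r i * p C)
    (hbest : ∀ i, ∀ C ∈ parts, x i C ≠ 0 → ν i C / lvol C = r i * p C) :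
    IsEqm parts κ (fun i => Vlin parts (ν i)) p x := by
  refine ⟨hp, hx, hfeas, fun i => (hbudget i).le, fun i y hy h => ?_⟩
  rw [← hbudget i]
  simp only [Vlin_eq_sum] at h
  exact sum_price_lt_of_utility_lt (hr i) (hratio i) (hbest i) hy h

namespace Stmt12

lemma A_ne_B : A ≠ B := ne_of_mem_of_not_mem' (a := 0) (by norm_num [A]) (by norm_num [B])
lemma A_ne_C : A ≠ C := ne_of_mem_of_not_mem' (a := 0) (by norm_num [A]) (by norm_num [C])
lemma A_ne_C₁ : A ≠ C₁ := ne_of_mem_of_not_mem' (a := 0) (by norm_num [A]) (by norm_num [C₁])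
lemma A_ne_C₂ : A ≠ C₂ := ne_of_mem_of_not_mem' (a := 0) (by norm_num [A]) (by norm_num [C₂])
lemma B_ne_C : B ≠ C := ne_of_mem_of_not_mem' (a := 1/3) (by norm_num [B]) (by norm_num [C])
lemma B_ne_C₁ : B ≠ C₁ := ne_of_mem_of_not_mem' (a := 1/3) (by norm_num [B]) (by norm_num [C₁])
lemma B_ne_C₂ : B ≠ C₂ := ne_of_mem_of_not_mem' (a := 1/3) (by norm_num [B]) (by norm_num [C₂])
lemma C₁_ne_C₂ : C₁ ≠ C₂ := ne_of_mem_of_not_mem' (a := 2/3) (by norm_num [C₁]) (by norm_num [C₂])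

lemma sum_partsπ (f : Set ℝ → ℝ) : ∑ S ∈ partsπ, f S = f A + f B + f C := by
  rw [partsπ, Finset.sum_insert (by simp [A_ne_B, A_ne_C]),
    Finset.sum_insert (by simp [B_ne_C]), Finset.sum_singleton, add_assoc]

lemma sum_partsρ (f : Set ℝ → ℝ) : ∑ S ∈ partsρ, f S = f A + f B + f C₁ + f C₂ := by
  rw [partsρ, Finset.sum_insert (by simp [A_ne_B, A_ne_C₁, A_ne_C₂]),
    Finset.sum_insert (by simp [B_ne_C₁, B_ne_C₂]), Finset.sum_insert (by simp [C₁_ne_C₂]),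
    Finset.sum_singleton, add_assoc, add_assoc]

lemma νs_div_lvol_A (i : Fin 4) : νs i A / lvol A = ![3/2, 3/2, 0, 0] i := by
  fin_cases i <;> simp [νs, ν₁, ν₂, ν₃, ν₄, A, Ico_inter_Ico, lvol_diff] <;> norm_num

lemma νs_div_lvol_B (i : Fin 4) : νs i B / lvol B = ![3/2, 0, 5/3, 5/3] i := by
  fin_cases i <;> simp [νs, ν₁, ν₂, ν₃, ν₄, B, Ico_inter_Ico] <;> norm_num

lemma νs_div_lvol_C (i : Fin 4) : νs i C / lvol C = ![0, 3/2, 4/3, 4/3] i := by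
  fin_cases i <;> simp [νs, ν₁, ν₂, ν₃, ν₄, C, Ico_inter_Ico, lvol_diff] <;> norm_num

lemma νs_div_lvol_C₁ (i : Fin 4) : νs i C₁ / lvol C₁ = ![0, 3/2, 8/3, 0] i := by
  fin_cases i <;> simp [νs, ν₁, ν₂, ν₃, ν₄, C₁, Ico_inter_Ico, lvol_diff] <;> norm_num

lemma νs_div_lvol_C₂ (i : Fin 4) : νs i C₂ / lvol C₂ = ![0, 3/2, 0, 8/3] i := by
  fin_cases i <;> simp [νs, ν₁, ν₂, ν₃, ν₄, C₂, Ico_inter_Ico, lvol_diff] <;> norm_num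

lemma lvol_A : lvol A = 1/3 := by norm_num [A]
lemma lvol_B : lvol B = 1/3 := by norm_num [B]
lemma lvol_C : lvol C = 1/3 := by norm_num [C]
lemma lvol_C₁ : lvol C₁ = 1/6 := by norm_num [C₁]
lemma lvol_C₂ : lvol C₂ = 1/6 := by norm_num [C₂]

lemma isEqm_partsπ : IsEqm partsπ κ (fun i => Vlin partsπ (νs i)) (fun _ => 1) xs := by
  refine isEqm_of_buys_best_ratio ![3/2, 3/2, 5/3, 5/3] (fun _ _ => zero_le_one) ?_ ?_ ?_
    (fun i => by fin_cases i <;> norm_num) ?_ ?_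
  · intro i S _
    fin_cases i <;> simp only [xs] <;> simp <;> split_ifs <;> norm_num
  · intro S hS
    simp only [partsπ, Finset.mem_insert, Finset.mem_singleton] at hS
    rcases hS with rfl | rfl | rfl <;>
      simp [Fin.sum_univ_four, xs, A_ne_B, A_ne_C, B_ne_C, A_ne_B.symm, A_ne_C.symm, B_ne_C.symm,
        lvol_A, lvol_B, lvol_C]
    all_goals norm_num
  · intro i
    rw [sum_partsπ, sum_partsπ]
    fin_cases i <;>
      simp [xs, κ, A_ne_B, A_ne_C, B_ne_C, A_ne_B.symm, A_ne_C.symm, B_ne_C.symm,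
        lvol_A, lvol_B, lvol_C] <;> norm_num
  · intro i S hS
    simp only [partsπ, Finset.mem_insert, Finset.mem_singleton] at hS
    rcases hS with rfl | rfl | rfl <;> fin_cases i <;>
      norm_num [νs_div_lvol_A, νs_div_lvol_B, νs_div_lvol_C]
  · intro i S _ hx
    fin_cases i <;> simp [xs] at hx <;> subst_vars <;>
      simp [νs_div_lvol_A, νs_div_lvol_B, νs_div_lvol_C]

lemma isEqm_partsρ : IsEqm partsρ κ (fun i => Vlin partsρ (νs i)) (fun _ => 1) ys := by
  refine isEqm_of_buys_best_ratio ![3/2, 3/2, 8/3, 8/3] (fun _ _ => zero_le_one) ?_ ?_ ?_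
    (fun i => by fin_cases i <;> norm_num) ?_ ?_
  · intro i S _
    fin_cases i <;> simp only [ys] <;> simp <;> split_ifs <;> norm_num
  · intro S hS
    simp only [partsρ, Finset.mem_insert, Finset.mem_singleton] at hS
    rcases hS with rfl | rfl | rfl | rfl <;>
      simp [Fin.sum_univ_four, ys, A_ne_B, A_ne_C₁, A_ne_C₂, B_ne_C₁, B_ne_C₂, C₁_ne_C₂,
        A_ne_B.symm, A_ne_C₁.symm, A_ne_C₂.symm, B_ne_C₁.symm, B_ne_C₂.symm, C₁_ne_C₂.symm,
        lvol_A, lvol_B, lvol_C₁, lvol_C₂]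
  · intro i
    rw [sum_partsρ, sum_partsρ]
    fin_cases i <;>
      simp [ys, κ, A_ne_B, A_ne_C₁, A_ne_C₂, B_ne_C₁, B_ne_C₂, C₁_ne_C₂,
        A_ne_B.symm, A_ne_C₁.symm, A_ne_C₂.symm, B_ne_C₁.symm, B_ne_C₂.symm, C₁_ne_C₂.symm,
        lvol_A, lvol_B, lvol_C₁, lvol_C₂] <;> norm_num
  · intro i S hS
    simp only [partsρ, Finset.mem_insert, Finset.mem_singleton] at hS
    rcases hS with rfl | rfl | rfl | rfl <;> fin_cases i <;>
      norm_num [νs_div_lvol_A, νs_div_lvol_B, νs_div_lvol_C₁, νs_div_lvol_C₂]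
  · intro i S _ hy
    fin_cases i <;> simp [ys] at hy <;> subst_vars <;>
      simp [νs_div_lvol_A, νs_div_lvol_B, νs_div_lvol_C₁, νs_div_lvol_C₂]

/-- (a) unit prices and `(x^i)` form a competitive equilibrium of `E(π)`;
(b) unit prices and `(y^i)` form a competitive equilibrium of `E(ρ)`. In particular,
agent 1's equilibrium bundle is positive only on `A` under `π` and positive only on `B`
under `ρ`, even though `A, B` belong to both classifications and their relative price
equals `1` in both equilibria. -/
theorem refinement_switches_trading_positions :
    IsEqm partsπ κ (fun i => Vlin partsπ (νs i)) (fun _ => 1) xs ∧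
    IsEqm partsρ κ (fun i => Vlin partsρ (νs i)) (fun _ => 1) ys ∧
    (0 < xs 0 A ∧ ∀ S ∈ partsπ, S ≠ A → xs 0 S = 0) ∧
    (0 < ys 0 B ∧ ∀ S ∈ partsρ, S ≠ B → ys 0 S = 0) ∧
    A ∈ partsπ ∧ B ∈ partsπ ∧ A ∈ partsρ ∧ B ∈ partsρ ∧
    ((fun _ => (1:ℝ)) A / (fun _ => (1:ℝ)) B = 1) := by
  refine ⟨isEqm_partsπ, isEqm_partsρ, ⟨by norm_num [xs], fun S _ hS => by simp [xs, hS]⟩,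
    ⟨by norm_num [ys], fun S _ hS => by simp [ys, hS]⟩, ?_, ?_, ?_, ?_, div_one 1⟩ <;>
  simp [partsπ, partsρ]

end Stmt12

end
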